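/- (Sym-Tafel formula, discrete case) Let λ ∈ ℝ, let a_n > 0, κ_n ∈ (0,π) be given sequences, and set ν_{n+1} = 2·arctan(a_nλ/2) and ε_n = a_n/(1 + a_n²λ²/4). For each λ let φ_n(λ) be an SU(2)-valued sequence, differentiable in λ, satisfying φ_{n+1} = φ_n·L_n with L_n = [[e^{−iν_{n+1}/2}·cos(κ_{n+1}/2), −e^{−iν_{n+1}/2}·sin(κ_{n+1}/2)],[e^{iν_{n+1}/2}·sin(κ_{n+1}/2), e^{iν_{n+1}/2}·cos(κ_{n+1}/2)]]. Set S_n = −(∂_λφ_n)·φ_n⁻¹ and γ_n = f⁻¹(S_n). Then γ is a discrete space curve with |γ_{n+1} − γ_n| = ε_n, the angle between consecutive tangent vectors T_{n−1}, T_n equals κ_n, and the angle between consecutive binormal vectors B_{n−1}, B_n equals ν_n; in particular γ has constant torsion λ. -/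

import Mathlib

/-!
`S_n` lies in `su(2)` and `γ_n = f⁻¹(S_n)`. Since `∂_λ ν_{n+1} = ε_n`, differentiating
`φ_{n+1} = φ_n L_n` in `λ` gives `∂_λ L_n = -ε_n f(e₁) L_n`, hence
`S_{n+1} - S_n = ε_n φ_n f(e₁) φ_n⁻¹`, i.e. `γ_{n+1} - γ_n = ε_n Ad(φ_n) e₁`.
For unitary `U`, `Ad(U) = f⁻¹ ∘ (U · U⁻¹) ∘ f` is a rotation of `ℝ³`: it preserves
`⟨x, y⟩ = -2 tr(f x f y)` and `f(x × y) = [f x, f y]`. Writing `L_n` as a diagonal phase times a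
real rotation shows that `Ad(L_n)` is the rotation by `κ_{n+1}` about `e₃` followed by the rotation
by `-ν_{n+1}` about `e₁`. Consequently the Frenet frame `(T_n, N_n, B_n)` is `Ad(φ_n)(e₁, e₂, e₃)`,
and all angles between consecutive frames are entries of the matrix of `Ad(L_n)`.
-/

open Matrix

noncomputable section

/-- Euclidean inner product on ℝ³ (written as `Fin 3 → ℝ`). -/
def dot3 (x y : Fin 3 → ℝ) : ℝ := x 0 * y 0 + x 1 * y 1 + x 2 * y 2

/-- Cross product on ℝ³. -/
def cross3 (x y : Fin 3 → ℝ) : Fin 3 → ℝ :=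
  ![x 1 * y 2 - x 2 * y 1, x 2 * y 0 - x 0 * y 2, x 0 * y 1 - x 1 * y 0]

/-- Euclidean norm on ℝ³. -/
def norm3 (x : Fin 3 → ℝ) : ℝ := Real.sqrt (dot3 x x)

/-- Tangent vector T_n = (γ_{n+1} − γ_n)/|γ_{n+1} − γ_n| of a discrete space curve. -/
def dT (γ : ℤ → Fin 3 → ℝ) (n : ℤ) : Fin 3 → ℝ :=
  (norm3 (γ (n + 1) - γ n))⁻¹ • (γ (n + 1) - γ n)

/-- Binormal vector B_n = (T_{n−1} × T_n)/|T_{n−1} × T_n|. -/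
def dB (γ : ℤ → Fin 3 → ℝ) (n : ℤ) : Fin 3 → ℝ :=
  (norm3 (cross3 (dT γ (n - 1)) (dT γ n)))⁻¹ • cross3 (dT γ (n - 1)) (dT γ n)

/-- Principal normal vector N_n = B_n × T_n. -/
def dN (γ : ℤ → Fin 3 → ℝ) (n : ℤ) : Fin 3 → ℝ := cross3 (dB γ n) (dT γ n)

/-- The matrix L_n of the discrete Frenet–Serret formula, in SU(2) form,
with ν the binormal angle and k the tangent angle κ_{n+1}. -/
def Ldisc (ν k : ℝ) : Matrix (Fin 2) (Fin 2) ℂ :=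
  !![Complex.exp (-(Complex.I / 2) * (ν : ℂ)) * ((Real.cos (k / 2) : ℝ) : ℂ),
       -(Complex.exp (-(Complex.I / 2) * (ν : ℂ)) * ((Real.sin (k / 2) : ℝ) : ℂ));
     Complex.exp ((Complex.I / 2) * (ν : ℂ)) * ((Real.sin (k / 2) : ℝ) : ℂ),
       Complex.exp ((Complex.I / 2) * (ν : ℂ)) * ((Real.cos (k / 2) : ℝ) : ℂ)]

open Complex

/-- The map `f` of the paper; `ofSu2` inverts it on `su(2)`. -/
def toSu2 (x : Fin 3 → ℝ) : Matrix (Fin 2) (Fin 2) ℂ :=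
  !![x 0 / 2 * I, x 1 / 2 * I - x 2 / 2; x 1 / 2 * I + x 2 / 2, -(x 0 / 2 * I)]

def ofSu2 (M : Matrix (Fin 2) (Fin 2) ℂ) : Fin 3 → ℝ :=
  ![2 * (M 0 0).im, 2 * (M 1 0).im, 2 * (M 1 0).re]

lemma ofSu2_toSu2 (x : Fin 3 → ℝ) : ofSu2 (toSu2 x) = x := by
  funext i; fin_cases i <;> simp [ofSu2, toSu2] <;> ring

lemma toSu2_conjTranspose (x : Fin 3 → ℝ) : (toSu2 x)ᴴ = -toSu2 x := by
  ext i j; fin_cases i <;> fin_cases j <;> apply Complex.ext <;> simp [toSu2]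

lemma trace_toSu2 (x : Fin 3 → ℝ) : (toSu2 x).trace = 0 := by
  simp [toSu2, Matrix.trace_fin_two]

lemma toSu2_ofSu2 {M : Matrix (Fin 2) (Fin 2) ℂ} (hM : Mᴴ = -M) (htr : M.trace = 0) :
    toSu2 (ofSu2 M) = M := by
  have h00 := congrFun (congrFun hM 0) 0
  have h01 := congrFun (congrFun hM 0) 1
  rw [Matrix.trace_fin_two] at htr
  simp only [Matrix.conjTranspose_apply, Matrix.neg_apply, Complex.ext_iff, Complex.star_def,
    conj_re, conj_im, neg_re, neg_im, add_re, add_im, zero_re, zero_im] at h00 h01 htr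
  ext i j; fin_cases i <;> fin_cases j <;> apply Complex.ext <;> simp [toSu2, ofSu2] <;> linarith

lemma ofSu2_sub (M N : Matrix (Fin 2) (Fin 2) ℂ) : ofSu2 (M - N) = ofSu2 M - ofSu2 N := by
  funext i; fin_cases i <;> simp [ofSu2] <;> ring

lemma ofSu2_smul (c : ℝ) (M : Matrix (Fin 2) (Fin 2) ℂ) : ofSu2 (c • M) = c • ofSu2 M := by
  funext i; fin_cases i <;> simp [ofSu2] <;> ring

lemma toSu2_smul (c : ℝ) (x : Fin 3 → ℝ) : toSu2 (c • x) = c • toSu2 x := by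
  ext i j; fin_cases i <;> fin_cases j <;> apply Complex.ext <;> simp [toSu2] <;> ring

lemma dot3_eq_trace (x y : Fin 3 → ℝ) :
    (dot3 x y : ℂ) = -2 * (toSu2 x * toSu2 y).trace := by
  simp [dot3, toSu2, Matrix.trace_fin_two]
  ring_nf; rw [I_sq]; ring

lemma toSu2_cross3 (x y : Fin 3 → ℝ) :
    toSu2 (cross3 x y) = toSu2 x * toSu2 y - toSu2 y * toSu2 x := by
  ext i j; fin_cases i <;> fin_cases j <;> apply Complex.ext <;> simp [toSu2, cross3] <;> ring

lemma norm3_smul {c : ℝ} (hc : 0 ≤ c) (x : Fin 3 → ℝ) : norm3 (c • x) = c * norm3 x := by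
  rw [norm3, norm3, show dot3 (c • x) (c • x) = c ^ 2 * dot3 x x by simp [dot3]; ring,
    Real.sqrt_mul (sq_nonneg c), Real.sqrt_sq hc]

lemma cross3_sub_eq_zero_of_collinear {p q r : Fin 3 → ℝ} (h : Collinear ℝ {p, q, r}) :
    cross3 (q - p) (r - q) = 0 := by
  obtain ⟨v, hv⟩ := (collinear_iff_of_mem (by simp : p ∈ ({p, q, r} : Set _))).mp h
  obtain ⟨s, rfl⟩ := hv q (by simp)
  obtain ⟨t, rfl⟩ := hv r (by simp)
  funext i; fin_cases i <;> simp [cross3] <;> ring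

lemma cross3_smul_left (c : ℝ) (x y : Fin 3 → ℝ) : cross3 (c • x) y = c • cross3 x y := by
  funext i; fin_cases i <;> simp [cross3] <;> ring

lemma cross3_smul_right (c : ℝ) (x y : Fin 3 → ℝ) : cross3 x (c • y) = c • cross3 x y := by
  funext i; fin_cases i <;> simp [cross3] <;> ring

def adSu2 (U : Matrix (Fin 2) (Fin 2) ℂ) (x : Fin 3 → ℝ) : Fin 3 → ℝ :=
  ofSu2 (U * toSu2 x * Uᴴ)

section adSu2

variable {U : Matrix (Fin 2) (Fin 2) ℂ}

lemma adSu2_smul (U : Matrix (Fin 2) (Fin 2) ℂ) (c : ℝ) (x : Fin 3 → ℝ) :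
    adSu2 U (c • x) = c • adSu2 U x := by
  rw [adSu2, adSu2, toSu2_smul, Matrix.mul_smul, Matrix.smul_mul, ofSu2_smul]

lemma trace_conj_conjTranspose (hU : Uᴴ * U = 1) (A : Matrix (Fin 2) (Fin 2) ℂ) :
    (U * A * Uᴴ).trace = A.trace := by
  rw [Matrix.trace_mul_cycle, hU, Matrix.one_mul]

lemma conj_mul_conj (hU : Uᴴ * U = 1) (A B : Matrix (Fin 2) (Fin 2) ℂ) :
    U * A * Uᴴ * (U * B * Uᴴ) = U * (A * B) * Uᴴ :=
  calc U * A * Uᴴ * (U * B * Uᴴ) = U * A * (Uᴴ * U) * B * Uᴴ := by simp only [Matrix.mul_assoc]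
    _ = _ := by rw [hU, Matrix.mul_one, Matrix.mul_assoc U]

lemma toSu2_adSu2 (hU : Uᴴ * U = 1) (x : Fin 3 → ℝ) : toSu2 (adSu2 U x) = U * toSu2 x * Uᴴ := by
  refine toSu2_ofSu2 ?_ ?_
  · rw [Matrix.conjTranspose_mul, Matrix.conjTranspose_mul, Matrix.conjTranspose_conjTranspose,
      toSu2_conjTranspose, Matrix.neg_mul, Matrix.mul_neg, Matrix.mul_assoc]
  · rw [trace_conj_conjTranspose hU, trace_toSu2]

lemma dot3_adSu2 (hU : Uᴴ * U = 1) (x y : Fin 3 → ℝ) :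
    dot3 (adSu2 U x) (adSu2 U y) = dot3 x y := by
  apply Complex.ofReal_injective
  rw [dot3_eq_trace, dot3_eq_trace, toSu2_adSu2 hU, toSu2_adSu2 hU, conj_mul_conj hU,
    trace_conj_conjTranspose hU]

lemma norm3_adSu2 (hU : Uᴴ * U = 1) (x : Fin 3 → ℝ) : norm3 (adSu2 U x) = norm3 x := by
  rw [norm3, norm3, dot3_adSu2 hU]

lemma cross3_adSu2 (hU : Uᴴ * U = 1) (x y : Fin 3 → ℝ) :
    cross3 (adSu2 U x) (adSu2 U y) = adSu2 U (cross3 x y) := by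
  rw [← ofSu2_toSu2 (cross3 (adSu2 U x) (adSu2 U y)), toSu2_cross3, toSu2_adSu2 hU,
    toSu2_adSu2 hU, conj_mul_conj hU, conj_mul_conj hU, ← Matrix.sub_mul, ← Matrix.mul_sub,
    ← toSu2_cross3, adSu2]

lemma adSu2_mul (U : Matrix (Fin 2) (Fin 2) ℂ) {V : Matrix (Fin 2) (Fin 2) ℂ} (hV : Vᴴ * V = 1)
    (x : Fin 3 → ℝ) : adSu2 (U * V) x = adSu2 U (adSu2 V x) := by
  change ofSu2 _ = ofSu2 (U * toSu2 (adSu2 V x) * Uᴴ)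
  rw [toSu2_adSu2 hV, Matrix.conjTranspose_mul]
  simp only [Matrix.mul_assoc]

end adSu2

def phaseMat (ν : ℝ) : Matrix (Fin 2) (Fin 2) ℂ :=
  !![exp (-(I / 2) * ν), 0; 0, exp ((I / 2) * ν)]

def rotMat (k : ℝ) : Matrix (Fin 2) (Fin 2) ℂ :=
  !![(Real.cos (k / 2) : ℂ), -(Real.sin (k / 2) : ℂ);
     (Real.sin (k / 2) : ℂ), (Real.cos (k / 2) : ℂ)]

lemma Ldisc_eq_mul (ν k : ℝ) : Ldisc ν k = phaseMat ν * rotMat k := by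
  ext i j; fin_cases i <;> fin_cases j <;> simp [Ldisc, phaseMat, rotMat]

lemma phaseMat_eq (ν : ℝ) : phaseMat ν =
    !![Real.cos (ν / 2) - Real.sin (ν / 2) * I, 0;
       0, Real.cos (ν / 2) + Real.sin (ν / 2) * I] := by
  have h : ∀ t : ℝ, exp ((I / 2) * (t : ℂ)) = Real.cos (t / 2) + Real.sin (t / 2) * I := by
    intro t
    rw [show (I / 2) * (t : ℂ) = ((t / 2 : ℝ) : ℂ) * I by push_cast; ring, exp_mul_I,
      ← ofReal_cos, ← ofReal_sin]
  rw [phaseMat, show -(I / 2) * (ν : ℂ) = (I / 2) * ((-ν : ℝ) : ℂ) by push_cast; ring, h, h,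
    neg_div, Real.cos_neg, Real.sin_neg, ofReal_neg, neg_mul, ← sub_eq_add_neg]

lemma phaseMat_unitary (ν : ℝ) : (phaseMat ν)ᴴ * phaseMat ν = 1 := by
  have h := Real.sin_sq_add_cos_sq (ν / 2)
  rw [phaseMat_eq]
  generalize Real.cos (ν / 2) = c at h
  generalize Real.sin (ν / 2) = s at h
  ext i j; fin_cases i <;> fin_cases j <;> apply Complex.ext <;> simp [Matrix.mul_apply] <;>
    first | ring1 | linear_combination h

lemma rotMat_unitary (k : ℝ) : (rotMat k)ᴴ * rotMat k = 1 := by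
  have h := Real.sin_sq_add_cos_sq (k / 2)
  rw [rotMat]
  generalize Real.cos (k / 2) = c at h
  generalize Real.sin (k / 2) = s at h
  ext i j; fin_cases i <;> fin_cases j <;> apply Complex.ext <;> simp [Matrix.mul_apply] <;>
    first | ring1 | linear_combination h

lemma Ldisc_unitary (ν k : ℝ) : (Ldisc ν k)ᴴ * Ldisc ν k = 1 := by
  rw [Ldisc_eq_mul, Matrix.conjTranspose_mul, Matrix.mul_assoc, ← Matrix.mul_assoc _ (phaseMat ν),
    phaseMat_unitary, Matrix.one_mul, rotMat_unitary]

lemma adSu2_phaseMat (ν : ℝ) (x : Fin 3 → ℝ) : adSu2 (phaseMat ν) x =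
    ![x 0, Real.cos ν * x 1 + Real.sin ν * x 2, Real.cos ν * x 2 - Real.sin ν * x 1] := by
  have h := Real.sin_sq_add_cos_sq (ν / 2)
  have hc : Real.cos ν = Real.cos (ν / 2) ^ 2 - Real.sin (ν / 2) ^ 2 := by
    rw [← Real.cos_two_mul', mul_div_cancel₀ _ two_ne_zero]
  have hs : Real.sin ν = 2 * Real.sin (ν / 2) * Real.cos (ν / 2) := by
    rw [← Real.sin_two_mul, mul_div_cancel₀ _ two_ne_zero]
  rw [adSu2, phaseMat_eq, hc, hs]
  generalize Real.cos (ν / 2) = c at h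
  generalize Real.sin (ν / 2) = s at h
  funext i; fin_cases i <;> simp [ofSu2, toSu2, Matrix.mul_apply]
  · linear_combination x 0 * h
  · ring
  · ring

lemma adSu2_rotMat (k : ℝ) (x : Fin 3 → ℝ) : adSu2 (rotMat k) x =
    ![Real.cos k * x 0 - Real.sin k * x 1, Real.sin k * x 0 + Real.cos k * x 1, x 2] := by
  have h := Real.sin_sq_add_cos_sq (k / 2)
  have hc : Real.cos k = Real.cos (k / 2) ^ 2 - Real.sin (k / 2) ^ 2 := by
    rw [← Real.cos_two_mul', mul_div_cancel₀ _ two_ne_zero]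
  have hs : Real.sin k = 2 * Real.sin (k / 2) * Real.cos (k / 2) := by
    rw [← Real.sin_two_mul, mul_div_cancel₀ _ two_ne_zero]
  rw [adSu2, rotMat, hc, hs]
  generalize Real.cos (k / 2) = c at h
  generalize Real.sin (k / 2) = s at h
  funext i; fin_cases i <;> simp [ofSu2, toSu2, Matrix.mul_apply]
  · ring
  · ring
  · linear_combination x 2 * h

lemma adSu2_Ldisc (ν k : ℝ) (x : Fin 3 → ℝ) : adSu2 (Ldisc ν k) x =
    ![Real.cos k * x 0 - Real.sin k * x 1,
      Real.cos ν * (Real.sin k * x 0 + Real.cos k * x 1) + Real.sin ν * x 2,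
      Real.cos ν * x 2 - Real.sin ν * (Real.sin k * x 0 + Real.cos k * x 1)] := by
  rw [Ldisc_eq_mul, adSu2_mul _ (rotMat_unitary k), adSu2_rotMat, adSu2_phaseMat]
  simp

structure IsSymTafelFrame (Φ : ℤ → Matrix (Fin 2) (Fin 2) ℂ) (ν κ ε : ℤ → ℝ) (γ : ℤ → Fin 3 → ℝ) :
    Prop where
  unitary : ∀ n, (Φ n)ᴴ * Φ n = 1
  succ : ∀ n, Φ (n + 1) = Φ n * Ldisc (ν n) (κ (n + 1))
  sub : ∀ n, γ (n + 1) - γ n = ε n • adSu2 (Φ n) ![1, 0, 0]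
  eps_pos : ∀ n, 0 < ε n
  sin_pos : ∀ n, 0 < Real.sin (κ n)

namespace IsSymTafelFrame

variable {Φ : ℤ → Matrix (Fin 2) (Fin 2) ℂ} {ν κ ε : ℤ → ℝ} {γ : ℤ → Fin 3 → ℝ}

lemma adSu2_eq_pred (h : IsSymTafelFrame Φ ν κ ε γ) (n : ℤ) (x : Fin 3 → ℝ) :
    adSu2 (Φ n) x = adSu2 (Φ (n - 1)) (adSu2 (Ldisc (ν (n - 1)) (κ n)) x) := by
  have h' := h.succ (n - 1)
  rw [sub_add_cancel] at h'
  rw [h', adSu2_mul _ (Ldisc_unitary _ _)]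

lemma norm3_sub (h : IsSymTafelFrame Φ ν κ ε γ) (n : ℤ) : norm3 (γ (n + 1) - γ n) = ε n := by
  rw [h.sub, norm3_smul (h.eps_pos n).le, norm3_adSu2 (h.unitary n)]
  simp [norm3, dot3]

lemma dT_eq (h : IsSymTafelFrame Φ ν κ ε γ) (n : ℤ) : dT γ n = adSu2 (Φ n) ![1, 0, 0] := by
  rw [dT, h.norm3_sub, h.sub, smul_smul, inv_mul_cancel₀ (h.eps_pos n).ne', one_smul]

lemma cross3_dT (h : IsSymTafelFrame Φ ν κ ε γ) (n : ℤ) :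
    cross3 (dT γ (n - 1)) (dT γ n) = Real.sin (κ n) • adSu2 (Φ n) ![0, 0, 1] := by
  rw [h.dT_eq, h.dT_eq, h.adSu2_eq_pred n, h.adSu2_eq_pred n, cross3_adSu2 (h.unitary _),
    ← adSu2_smul, adSu2_Ldisc, adSu2_Ldisc]
  congr 1
  funext i; fin_cases i <;> simp [cross3] <;> ring

lemma dB_eq (h : IsSymTafelFrame Φ ν κ ε γ) (n : ℤ) : dB γ n = adSu2 (Φ n) ![0, 0, 1] := by
  rw [dB, h.cross3_dT, norm3_smul (h.sin_pos n).le, norm3_adSu2 (h.unitary n), smul_smul]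
  simp [norm3, dot3, (h.sin_pos n).ne']

lemma dN_eq (h : IsSymTafelFrame Φ ν κ ε γ) (n : ℤ) : dN γ n = adSu2 (Φ n) ![0, 1, 0] := by
  rw [dN, h.dB_eq, h.dT_eq, cross3_adSu2 (h.unitary n)]
  congr 1
  funext i; fin_cases i <;> simp [cross3]

lemma dot3_dT_dT_pred (h : IsSymTafelFrame Φ ν κ ε γ) (n : ℤ) :
    dot3 (dT γ n) (dT γ (n - 1)) = Real.cos (κ n) := by
  rw [h.dT_eq, h.dT_eq, h.adSu2_eq_pred n, dot3_adSu2 (h.unitary _), adSu2_Ldisc]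
  simp [dot3]

lemma dot3_dB_dB_pred (h : IsSymTafelFrame Φ ν κ ε γ) (n : ℤ) :
    dot3 (dB γ n) (dB γ (n - 1)) = Real.cos (ν (n - 1)) := by
  rw [h.dB_eq, h.dB_eq, h.adSu2_eq_pred n, dot3_adSu2 (h.unitary _), adSu2_Ldisc]
  simp [dot3]

lemma dot3_dB_dN_pred (h : IsSymTafelFrame Φ ν κ ε γ) (n : ℤ) :
    dot3 (dB γ n) (dN γ (n - 1)) = Real.sin (ν (n - 1)) := by
  rw [h.dB_eq, h.dN_eq, h.adSu2_eq_pred n, dot3_adSu2 (h.unitary _), adSu2_Ldisc]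
  simp [dot3]

lemma not_collinear (h : IsSymTafelFrame Φ ν κ ε γ) (n : ℤ) :
    ¬ Collinear ℝ ({γ (n - 1), γ n, γ (n + 1)} : Set (Fin 3 → ℝ)) := by
  intro hcol
  have hzero := cross3_sub_eq_zero_of_collinear hcol
  have hprev := h.sub (n - 1)
  rw [sub_add_cancel, ← h.dT_eq] at hprev
  rw [hprev, h.sub, ← h.dT_eq, cross3_smul_left, cross3_smul_right, h.cross3_dT, smul_smul,
    smul_smul] at hzero
  have hnorm := congrArg norm3 hzero
  have hpos : 0 < ε (n - 1) * ε n * Real.sin (κ n) :=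
    mul_pos (mul_pos (h.eps_pos _) (h.eps_pos n)) (h.sin_pos n)
  rw [norm3_smul hpos.le, norm3_adSu2 (h.unitary n)] at hnorm
  simp [norm3, dot3, hpos.ne'] at hnorm

end IsSymTafelFrame

lemma HasDerivAt.matrix_mul_apply {𝕜 𝔸 m n p : Type*} [NontriviallyNormedField 𝕜] [NormedRing 𝔸]
    [NormedAlgebra 𝕜 𝔸] [Fintype n] {A : 𝕜 → Matrix m n 𝔸} {B : 𝕜 → Matrix n p 𝔸}
    {A' : Matrix m n 𝔸} {B' : Matrix n p 𝔸} {x : 𝕜}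
    (hA : ∀ i j, HasDerivAt (fun u => A u i j) (A' i j) x)
    (hB : ∀ i j, HasDerivAt (fun u => B u i j) (B' i j) x) (i : m) (j : p) :
    HasDerivAt (fun u => (A u * B u) i j) ((A' * B x + A x * B') i j) x := by
  simp only [Matrix.mul_apply, Matrix.add_apply, ← Finset.sum_add_distrib]
  exact HasDerivAt.fun_sum fun k _ => (hA i k).fun_mul (hB k j)

lemma hasDerivAt_Ldisc_apply {ν : ℝ → ℝ} {ν' x : ℝ} (hν : HasDerivAt ν ν' x) (k : ℝ) (i j : Fin 2) :
    HasDerivAt (fun u => Ldisc (ν u) k i j)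
      ((-(ν' • (toSu2 ![1, 0, 0] * Ldisc (ν x) k))) i j) x := by
  have hexp : ∀ c : ℂ, HasDerivAt (fun u => exp (c * ν u)) (exp (c * ν x) * (c * ν')) x :=
    fun c => (hν.ofReal_comp.const_mul c).cexp
  fin_cases i <;> fin_cases j
  · exact ((hexp _).mul_const _).congr_deriv (by simp [Ldisc, toSu2]; ring)
  · exact ((hexp _).mul_const _).neg.congr_deriv (by simp [Ldisc, toSu2]; ring)
  · exact ((hexp _).mul_const _).congr_deriv (by simp [Ldisc, toSu2]; ring)
  · exact ((hexp _).mul_const _).congr_deriv (by simp [Ldisc, toSu2]; ring)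

lemma hasDerivAt_two_mul_arctan (b x : ℝ) :
    HasDerivAt (fun u => 2 * Real.arctan (b * u / 2)) (b / (1 + b ^ 2 * x ^ 2 / 4)) x := by
  have h := (((hasDerivAt_id' x).const_mul b).div_const 2).arctan.const_mul 2
  refine h.congr_deriv ?_
  field_simp
  ring

lemma symTafel_potential_succ {φ φl : ℝ → ℤ → Matrix (Fin 2) (Fin 2) ℂ} {ν : ℤ → ℝ → ℝ}
    {κ ε : ℤ → ℝ} {x : ℝ} (hU : ∀ n, (φ x n)ᴴ * φ x n = 1)
    (hrec : ∀ l n, φ l (n + 1) = φ l n * Ldisc (ν n l) (κ (n + 1)))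
    (hl : ∀ n i j, HasDerivAt (fun u => φ u n i j) (φl x n i j) x)
    (hν : ∀ n, HasDerivAt (ν n) (ε n) x) (n : ℤ) :
    -(φl x (n + 1) * (φ x (n + 1))⁻¹) =
      -(φl x n * (φ x n)⁻¹) + ε n • (φ x n * toSu2 ![1, 0, 0] * (φ x n)ᴴ) := by
  have hderiv : φl x (n + 1) = φl x n * Ldisc (ν n x) (κ (n + 1)) +
      φ x n * -(ε n • (toSu2 ![1, 0, 0] * Ldisc (ν n x) (κ (n + 1)))) := by
    ext i j
    have hprod := HasDerivAt.matrix_mul_apply (hl n) (hasDerivAt_Ldisc_apply (hν n) (κ (n + 1))) i j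
    simp only [← hrec] at hprod
    exact (hl (n + 1) i j).unique hprod
  have hLL := mul_eq_one_comm.mp (Ldisc_unitary (ν n x) (κ (n + 1)))
  rw [Matrix.inv_eq_left_inv (hU (n + 1)), Matrix.inv_eq_left_inv (hU n), hrec x n,
    Matrix.conjTranspose_mul, hderiv]
  calc _ = -(φl x n * (Ldisc (ν n x) (κ (n + 1)) * (Ldisc (ν n x) (κ (n + 1)))ᴴ) * (φ x n)ᴴ) +
        ε n • (φ x n * toSu2 ![1, 0, 0] *
          (Ldisc (ν n x) (κ (n + 1)) * (Ldisc (ν n x) (κ (n + 1)))ᴴ) * (φ x n)ᴴ) := by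
        simp only [Matrix.add_mul, Matrix.mul_neg, Matrix.neg_mul, Matrix.mul_smul,
          Matrix.smul_mul, Matrix.mul_assoc, neg_add, neg_neg]
    _ = _ := by rw [hLL, Matrix.mul_one, Matrix.mul_one]

lemma sin_two_mul_arctan (x : ℝ) : Real.sin (2 * Real.arctan x) = 2 * x / (1 + x ^ 2) := by
  have h : Real.sqrt (1 + x ^ 2) ^ 2 = 1 + x ^ 2 := Real.sq_sqrt (by positivity)
  rw [Real.sin_two_mul, Real.sin_arctan, Real.cos_arctan]
  field_simp
  rw [h]

/-- (Sym–Tafel formula, discrete case.)  Given λ, a_n > 0, κ_n ∈ (0,π), with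
ν_{n+1} = 2 arctan(a_nλ/2) and ε_n = a_n/(1+a_n²λ²/4), and an SU(2)-valued
solution φ_n(λ) of the discrete linear problem, the curve γ_n = f⁻¹(−(∂_λφ_n)φ_n⁻¹)
is a discrete space curve with |γ_{n+1} − γ_n| = ε_n, tangent angles κ_n and
binormal angles ν_n; in particular γ has constant torsion λ. -/
theorem statement8 (lam : ℝ) (a κ : ℤ → ℝ)
    (ha : ∀ n, 0 < a n) (hκ : ∀ n, κ n ∈ Set.Ioo 0 Real.pi)
    (φ φl : ℝ → ℤ → Matrix (Fin 2) (Fin 2) ℂ)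
    (hsu : ∀ l n, (φ l n)ᴴ * φ l n = 1 ∧ (φ l n).det = 1)
    (hrec : ∀ l n, φ l (n + 1) = φ l n * Ldisc (2 * Real.arctan (a n * l / 2)) (κ (n + 1)))
    (hl : ∀ l n, ∀ i j, HasDerivAt (fun u => φ u n i j) (φl l n i j) l)
    (S : ℤ → Matrix (Fin 2) (Fin 2) ℂ)
    (hS : ∀ n, S n = -(φl lam n * (φ lam n)⁻¹))
    (γ : ℤ → Fin 3 → ℝ)
    (hγ : ∀ n, γ n = ![2 * (S n 0 0).im, 2 * (S n 1 0).im, 2 * (S n 1 0).re]) :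
    (∀ n, ¬ Collinear ℝ ({γ (n - 1), γ n, γ (n + 1)} : Set (Fin 3 → ℝ))) ∧
    (∀ n, norm3 (γ (n + 1) - γ n) = a n / (1 + (a n) ^ 2 * lam ^ 2 / 4)) ∧
    (∀ n, dot3 (dT γ n) (dT γ (n - 1)) = Real.cos (κ n)) ∧
    (∀ n, dot3 (dB γ n) (dB γ (n - 1)) = Real.cos (2 * Real.arctan (a (n - 1) * lam / 2)) ∧
          dot3 (dB γ n) (dN γ (n - 1)) = Real.sin (2 * Real.arctan (a (n - 1) * lam / 2))) ∧
    (∀ n, Real.sin (2 * Real.arctan (a n * lam / 2)) / norm3 (γ (n + 1) - γ n) = lam) := by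
  have hU n : (φ lam n)ᴴ * φ lam n = 1 := (hsu lam n).1
  have hstep n : S (n + 1) = S n + (a n / (1 + a n ^ 2 * lam ^ 2 / 4)) •
      (φ lam n * toSu2 ![1, 0, 0] * (φ lam n)ᴴ) := by
    rw [hS, hS]
    exact symTafel_potential_succ hU hrec (hl lam) (fun n => hasDerivAt_two_mul_arctan (a n) lam) n
  have hγ' n : γ n = ofSu2 (S n) := hγ n
  have frame : IsSymTafelFrame (φ lam) (fun n => 2 * Real.arctan (a n * lam / 2)) κ
      (fun n => a n / (1 + a n ^ 2 * lam ^ 2 / 4)) γ :=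
    { unitary := hU
      succ := hrec lam
      sub := fun n => by
        rw [hγ', hγ', ← ofSu2_sub, hstep, add_sub_cancel_left, ofSu2_smul]
        rfl
      eps_pos := fun n => div_pos (ha n) (by positivity)
      sin_pos := fun n => Real.sin_pos_of_pos_of_lt_pi (hκ n).1 (hκ n).2 }
  refine ⟨frame.not_collinear, frame.norm3_sub, frame.dot3_dT_dT_pred,
    fun n => ⟨frame.dot3_dB_dB_pred n, frame.dot3_dB_dN_pred n⟩, fun n => ?_⟩
  have ha' := (ha n).ne'
  rw [frame.norm3_sub, sin_two_mul_arctan]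
  field_simp
  ring
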